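/- arXiv:1010.0439 — 2 statements merged into one kernel-verified Lean document; each statement's English description precedes it below -/
import Mathlib

section
/- Let K : ℝ → ℝ be continuous with compact support and ∫ K(v) dv = 0, and let h : ℝ → ℝ be continuously differentiable with bounded derivative, sup_t |h'(t)| ≤ M. Then there exists a constant C > 0 (C = M ∫ |v K(v)| dv) such that for all ε ∈ ℝ and all b > 0, |∫ K((e - ε)/b) h(e) de| ≤ C b². -/
/-!
Substituting `e = ε + b v` turns the integral into `b ∫ K(v) h(ε + b v) dv`. Since `K` has
vanishing integral, `h(ε)` may be subtracted from `h(ε + b v)`, and the Lipschitz bound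
`|h(ε + b v) - h(ε)| ≤ M b |v|` (mean value theorem) gives a second factor of `b`.
-/

open MeasureTheory

section VanishingMoment

variable {K h : ℝ → ℝ} {L : NNReal}

theorem integral_comp_sub_div_mul_eq (K h : ℝ → ℝ) (ε : ℝ) {b : ℝ} (hb : 0 < b) :
    ∫ e, K ((e - ε) / b) * h e = b * ∫ v, K v * h (ε + b * v) := by
  let G : ℝ → ℝ := fun v => K v * h (ε + b * v)
  calc ∫ e, K ((e - ε) / b) * h e = ∫ e, G ((e - ε) / b) := by
        congr 1; funext e
        simp only [G, mul_div_cancel₀ _ hb.ne', add_sub_cancel]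
    _ = ∫ x, G (x / b) := integral_sub_right_eq_self (fun x => G (x / b)) ε
    _ = b * ∫ v, G v := by rw [Measure.integral_comp_div, abs_of_pos hb, smul_eq_mul]

theorem abs_mul_lipschitz_sub_le (hh : LipschitzWith L h) (ε b v : ℝ) :
    |K v * (h (ε + b * v) - h ε)| ≤ L * |b| * |v * K v| := by
  have hdist := hh.dist_le_mul (ε + b * v) ε
  rw [Real.dist_eq, Real.dist_eq, add_sub_cancel_left, abs_mul] at hdist
  calc |K v * (h (ε + b * v) - h ε)| ≤ |K v| * (L * (|b| * |v|)) := by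
        rw [abs_mul]; gcongr
    _ = L * |b| * |v * K v| := by rw [abs_mul]; ring

theorem integrable_mul_lipschitz_sub (hK : Integrable K) (hvK : Integrable fun v => v * K v)
    (hh : LipschitzWith L h) (ε b : ℝ) :
    Integrable fun v => K v * (h (ε + b * v) - h ε) := by
  refine Integrable.mono' (hvK.norm.const_mul (L * |b|)) ?_
    (ae_of_all _ fun v => abs_mul_lipschitz_sub_le hh ε b v)
  have hcont := hh.continuous
  exact hK.aestronglyMeasurable.mul (by fun_prop)

theorem integral_mul_comp_eq_integral_mul_sub (hK : Integrable K)
    (hvK : Integrable fun v => v * K v) (hK0 : ∫ v, K v = 0) (hh : LipschitzWith L h)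
    (ε b : ℝ) :
    ∫ v, K v * h (ε + b * v) = ∫ v, K v * (h (ε + b * v) - h ε) := by
  have hsplit : (fun v => K v * h (ε + b * v))
      = fun v => K v * (h (ε + b * v) - h ε) + K v * h ε := by
    funext v; ring
  rw [hsplit, integral_add (integrable_mul_lipschitz_sub hK hvK hh ε b) (hK.mul_const _),
    integral_mul_const, hK0, zero_mul, add_zero]

theorem abs_integral_mul_lipschitz_sub_le (hvK : Integrable fun v => v * K v)
    (hh : LipschitzWith L h) (ε b : ℝ) :
    |∫ v, K v * (h (ε + b * v) - h ε)| ≤ L * |b| * ∫ v, |v * K v| := by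
  rw [← integral_const_mul]
  exact norm_integral_le_of_norm_le (hvK.abs.const_mul _)
    (ae_of_all _ fun v => (Real.norm_eq_abs _).trans_le (abs_mul_lipschitz_sub_le hh ε b v))

theorem abs_integral_comp_sub_div_mul_le (hK : Integrable K)
    (hvK : Integrable fun v => v * K v) (hK0 : ∫ v, K v = 0) (hh : LipschitzWith L h)
    (ε : ℝ) {b : ℝ} (hb : 0 < b) :
    |∫ e, K ((e - ε) / b) * h e| ≤ L * (∫ v, |v * K v|) * b ^ 2 := by
  rw [integral_comp_sub_div_mul_eq K h ε hb,
    integral_mul_comp_eq_integral_mul_sub hK hvK hK0 hh, abs_mul, abs_of_pos hb]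
  calc b * |∫ v, K v * (h (ε + b * v) - h ε)| ≤ b * (L * |b| * ∫ v, |v * K v|) := by
        gcongr; exact abs_integral_mul_lipschitz_sub_le hvK hh ε b
    _ = L * (∫ v, |v * K v|) * b ^ 2 := by rw [abs_of_pos hb]; ring

end VanishingMoment

/-- Second inequality of (6.1) in Lemma 7 (MomderK): for a compactly supported
continuous kernel `K` with vanishing integral and a `C¹` function `h` with
bounded derivative, `|∫ K((e-ε)/b) h(e) de| ≤ C b²`. -/
theorem stmt0 (K h : ℝ → ℝ) (M : ℝ)
    (hKcont : Continuous K) (hKsupp : HasCompactSupport K)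
    (hKint : ∫ v, K v = 0)
    (hh : ContDiff ℝ 1 h) (hh' : ∀ t, |deriv h t| ≤ M) :
    ∃ C > 0, ∀ ε : ℝ, ∀ b : ℝ, 0 < b →
      |∫ e, K ((e - ε) / b) * h e| ≤ C * b ^ 2 := by
  have hM : 0 ≤ M := (abs_nonneg _).trans (hh' 0)
  have hlip : LipschitzWith M.toNNReal h :=
    lipschitzWith_of_nnnorm_deriv_le (hh.differentiable one_ne_zero) fun t => by
      rw [← NNReal.coe_le_coe, coe_nnnorm, Real.coe_toNNReal _ hM, Real.norm_eq_abs]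
      exact hh' t
  have hK : Integrable K := hKcont.integrable_of_hasCompactSupport hKsupp
  have hvK : Integrable fun v => v * K v :=
    (continuous_id.mul hKcont).integrable_of_hasCompactSupport hKsupp.mul_left
  set C := M * ∫ v, |v * K v|
  have hC : 0 ≤ C := mul_nonneg hM (integral_nonneg fun v => abs_nonneg _)
  refine ⟨C + 1, by linarith, fun ε b hb => ?_⟩
  calc |∫ e, K ((e - ε) / b) * h e| ≤ C * b ^ 2 := by
        simpa [C, Real.coe_toNNReal _ hM, mul_assoc] using
          abs_integral_comp_sub_div_mul_le hK hvK hKint hlip ε hb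
    _ ≤ (C + 1) * b ^ 2 := by gcongr; linarith
end

section
/- Let ε be a real random variable with density f satisfying sup_e |e^p f(e)| ≤ M for p ∈ {0, 2} and with twice continuously differentiable e ↦ e^p f(e) having bounded derivatives, and let K : ℝ → ℝ be a continuous compactly supported function with ∫ K(v) dv = 0. Then for every bounded measurable ψ and every ε₀ ∈ ℝ, b > 0: |E[ε² K((ε − ε₀)/b)]| ≤ max{ sup_e |∫ K((u−e)/b) u² f(u) du|, E[ε²] · sup_e |∫ K((u−e)/b) f(u) du| } ≤ C b² for a constant C independent of ε₀ and b. -/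
open MeasureTheory ProbabilityTheory

private lemma key_bound (M : ℝ) (hM0 : 0 ≤ M) (h : ℝ → ℝ)
    (hcd : ContDiff ℝ 2 h) (hder : ∀ t : ℝ, |deriv h t| ≤ M)
    (K : ℝ → ℝ) (hKcont : Continuous K) (hKsupp : HasCompactSupport K)
    (hKint : ∫ v, K v = 0) (e b : ℝ) (hb : 0 < b) :
    |∫ u, K ((u - e) / b) * h u| ≤ (M * ∫ v, |K v| * |v|) * b ^ 2 := by
  have hhcont : Continuous h := hcd.continuous
  have hdiff : Differentiable ℝ h := hcd.differentiable (by norm_num)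
  have hM0' : 0 ≤ M := le_trans (abs_nonneg _) (hder 0)
  have hlipW : LipschitzWith M.toNNReal h :=
    lipschitzWith_of_nnnorm_deriv_le hdiff (fun x => by
      rw [← NNReal.coe_le_coe, coe_nnnorm, Real.coe_toNNReal _ hM0, Real.norm_eq_abs]
      exact hder x)
  have hlip : ∀ x y : ℝ, |h x - h y| ≤ M * |x - y| := by
    intro x y
    have := hlipW.dist_le_mul x y
    rwa [Real.dist_eq, Real.dist_eq, Real.coe_toNNReal _ hM0] at this
  set F : ℝ → ℝ := fun u => K ((u - e) / b) * h u with hF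
  set G : ℝ → ℝ := fun v => K v * (h (b * v + e) - h e) with hG
  have hGsupp : HasCompactSupport G := hKsupp.mul_right
  have hGcont : Continuous G := by
    apply hKcont.mul
    exact ((hhcont.comp (by continuity)).sub continuous_const)
  have hGint : Integrable G := hGcont.integrable_of_hasCompactSupport hGsupp
  have hK2supp : HasCompactSupport (fun v => K v * h e) := hKsupp.mul_right
  have hK2int : Integrable (fun v => K v * h e) :=
    (hKcont.mul continuous_const).integrable_of_hasCompactSupport hK2supp
  -- change of variables
  have step1 : ∫ u, F u = ∫ u, F (u + e) := (integral_add_right_eq_self F e).symm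
  have step2 : (∫ v, F (b * v + e)) = |b⁻¹| • ∫ y, F (y + e) :=
    MeasureTheory.Measure.integral_comp_mul_left (fun y => F (y + e)) b
  have hFG : ∀ v, F (b * v + e) = K v * h (b * v + e) := by
    intro v
    simp only [hF]
    rw [add_sub_cancel_right, mul_div_cancel_left₀ _ hb.ne']
  have step3 : (∫ v, K v * h (b * v + e)) = ∫ v, G v := by
    have : (fun v => K v * h (b * v + e)) = fun v => G v + K v * h e := by
      funext v; simp only [hG]; ring
    rw [this, integral_add hGint hK2int, integral_mul_const, hKint, zero_mul, add_zero]
  have hmain : ∫ u, F u = b * ∫ v, G v := by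
    have e1 : (∫ v, F (b * v + e)) = ∫ v, G v := by
      rw [show (fun v => F (b * v + e)) = fun v => K v * h (b * v + e) from funext hFG]
      exact step3
    have e2 : (∫ v, G v) = b⁻¹ * ∫ y, F (y + e) := by
      rw [← e1, step2, abs_of_pos (inv_pos.mpr hb), smul_eq_mul]
    have e3 : (∫ v, G v) * b = ∫ y, F (y + e) := by
      rw [e2]; field_simp
    rw [step1, ← e3]; ring
  -- bound ∫ G
  have hKvint : Integrable (fun v => |K v| * |v|) := by
    apply Continuous.integrable_of_hasCompactSupport
    · exact (hKcont.abs.mul continuous_abs)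
    · exact (hKsupp.abs).mul_right
  have hInonneg : 0 ≤ ∫ v, |K v| * |v| :=
    integral_nonneg fun v => mul_nonneg (abs_nonneg _) (abs_nonneg _)
  have hbound : |∫ v, G v| ≤ M * b * ∫ v, |K v| * |v| := by
    calc |∫ v, G v| ≤ ∫ v, |G v| := by
          simpa [Real.norm_eq_abs] using norm_integral_le_integral_norm G
      _ ≤ ∫ v, (M * b) * (|K v| * |v|) := by
          apply integral_mono hGint.abs (hKvint.const_mul _)
          intro v
          simp only [hG, abs_mul]
          have h1 : |h (b * v + e) - h e| ≤ M * (b * |v|) := by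
            have := hlip (b * v + e) e
            simpa [abs_mul, abs_of_pos hb] using this
          calc |K v| * |h (b * v + e) - h e| ≤ |K v| * (M * (b * |v|)) :=
                mul_le_mul_of_nonneg_left h1 (abs_nonneg _)
            _ = M * b * (|K v| * |v|) := by ring
      _ = M * b * ∫ v, |K v| * |v| := integral_const_mul _ _
  rw [hmain, abs_mul, abs_of_pos hb]
  calc b * |∫ v, G v| ≤ b * (M * b * ∫ v, |K v| * |v|) :=
        mul_le_mul_of_nonneg_left hbound hb.le
    _ = (M * ∫ v, |K v| * |v|) * b ^ 2 := by ring

/-- Lemma 7 applied with `h_p(e) = e^p f(e)`, `p ∈ {0,2}` (used in Lemma 12):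
expectations of `ε² K((ε-ε₀)/b)` and the corresponding integrals against the
density are `O(b²)` uniformly in the evaluation point. -/
theorem stmt15 {Ω : Type*} [MeasureSpace Ω] [IsProbabilityMeasure (ℙ : Measure Ω)]
    (ε : Ω → ℝ) (hεmeas : Measurable ε) (f : ℝ → ℝ) (hf0 : ∀ e, 0 ≤ f e)
    (hdens : ∀ B : Set ℝ, MeasurableSet B →
      (ℙ : Measure Ω) (ε ⁻¹' B) = ENNReal.ofReal (∫ e in B, f e))
    (hε2 : Integrable (fun ω => (ε ω) ^ 2) (ℙ : Measure Ω))
    (M : ℝ)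
    (hbdd : ∀ p ∈ ({0, 2} : Set ℕ), ∀ e : ℝ, |e ^ p * f e| ≤ M)
    (hsmooth : ∀ p ∈ ({0, 2} : Set ℕ), ContDiff ℝ 2 (fun e => e ^ p * f e))
    (hder : ∀ p ∈ ({0, 2} : Set ℕ), ∀ t : ℝ,
      |deriv (fun e => e ^ p * f e) t| ≤ M)
    (K : ℝ → ℝ) (hKcont : Continuous K) (hKsupp : HasCompactSupport K)
    (hKint : ∫ v, K v = 0) :
    ∃ C > 0, ∀ ε₀ : ℝ, ∀ b : ℝ, 0 < b →
      (∀ e : ℝ, |∫ u, K ((u - e) / b) * (u ^ 2 * f u)| ≤ C * b ^ 2) ∧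
      (∀ e : ℝ, |∫ u, K ((u - e) / b) * f u| ≤ C * b ^ 2) ∧
      |∫ ω, (ε ω) ^ 2 * K ((ε ω - ε₀) / b) ∂(ℙ : Measure Ω)| ≤ C * b ^ 2 := by
  have h0mem : (0 : ℕ) ∈ ({0, 2} : Set ℕ) := by simp
  have h2mem : (2 : ℕ) ∈ ({0, 2} : Set ℕ) := by simp
  have hM0 : 0 ≤ M := le_trans (abs_nonneg _) (hbdd 0 h0mem 0)
  have hfeq : (fun e : ℝ => e ^ (0 : ℕ) * f e) = f := by funext e; simp
  have hcd0 : ContDiff ℝ 2 f := hfeq ▸ hsmooth 0 h0mem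
  have hder0 : ∀ t : ℝ, |deriv f t| ≤ M := by
    intro t; have := hder 0 h0mem t; rwa [hfeq] at this
  have hcd2 : ContDiff ℝ 2 (fun e : ℝ => e ^ 2 * f e) := hsmooth 2 h2mem
  have hder2 : ∀ t : ℝ, |deriv (fun e : ℝ => e ^ 2 * f e) t| ≤ M := hder 2 h2mem
  set I : ℝ := ∫ v, |K v| * |v| with hI
  have hInonneg : 0 ≤ I :=
    integral_nonneg fun v => mul_nonneg (abs_nonneg _) (abs_nonneg _)
  refine ⟨M * I + 1, by positivity, fun ε₀ b hb => ?_⟩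
  have hb2 : (0:ℝ) ≤ b ^ 2 := sq_nonneg b
  have hCle : (M * I) * b ^ 2 ≤ (M * I + 1) * b ^ 2 := by nlinarith
  have part1 : ∀ e : ℝ, |∫ u, K ((u - e) / b) * (u ^ 2 * f u)| ≤ (M * I + 1) * b ^ 2 :=
    fun e => le_trans (key_bound M hM0 _ hcd2 hder2 K hKcont hKsupp hKint e b hb) hCle
  have part2 : ∀ e : ℝ, |∫ u, K ((u - e) / b) * f u| ≤ (M * I + 1) * b ^ 2 :=
    fun e => le_trans (key_bound M hM0 f hcd0 hder0 K hKcont hKsupp hKint e b hb) hCle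
  refine ⟨part1, part2, ?_⟩
  -- expectation equals the density integral
  have hfcont : Continuous f := hcd0.continuous
  have hfmeas : Measurable f := hfcont.measurable
  have hfint : Integrable f := by
    by_contra hcon
    have h1 := hdens Set.univ MeasurableSet.univ
    rw [Set.preimage_univ, measure_univ, Measure.restrict_univ] at h1
    rw [integral_undef hcon] at h1
    simp at h1
  have hmap : (ℙ : Measure Ω).map ε
      = (volume : Measure ℝ).withDensity (fun u => ENNReal.ofReal (f u)) := by
    ext B hB
    rw [Measure.map_apply hεmeas hB, hdens B hB, withDensity_apply _ hB,
      ← ofReal_integral_eq_lintegral_ofReal hfint.restrict (ae_of_all _ hf0)]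
  have hgcont : Continuous (fun u : ℝ => u ^ 2 * K ((u - ε₀) / b)) := by
    apply (continuous_pow 2).mul
    exact hKcont.comp (by continuity)
  have heq1 : ∫ ω, (ε ω) ^ 2 * K ((ε ω - ε₀) / b) ∂(ℙ : Measure Ω)
      = ∫ u, u ^ 2 * K ((u - ε₀) / b) ∂((ℙ : Measure Ω).map ε) :=
    (integral_map hεmeas.aemeasurable hgcont.aestronglyMeasurable).symm
  have heq2 : ∫ u, u ^ 2 * K ((u - ε₀) / b) ∂((ℙ : Measure Ω).map ε)
      = ∫ u, K ((u - ε₀) / b) * (u ^ 2 * f u) := by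
    rw [hmap]
    have hd : (fun u : ℝ => ENNReal.ofReal (f u))
        = fun u : ℝ => ((Real.toNNReal (f u) : NNReal) : ENNReal) := rfl
    rw [hd, integral_withDensity_eq_integral_smul hfmeas.real_toNNReal]
    congr 1
    funext u
    rw [NNReal.smul_def, Real.coe_toNNReal _ (hf0 u), smul_eq_mul]
    ring
  rw [heq1, heq2]
  exact part1 ε₀
end
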